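/- Let G be an Eulerian digraph with sink s. A stable chip configuration σ on G is recurrent if and only if every nonempty induced subgraph of G∖s is ample for σ. -/

import Mathlib

/-!
Characterization of recurrent configurations on an Eulerian digraph with sink
(Holroyd et al., Lemma 4.2): a stable configuration σ is recurrent iff every nonempty
induced subgraph of G∖s is ample for σ.
-/

/-- The out-degree of a vertex. -/
def outdeg {V E : Type} [Fintype E] [DecidableEq V] (tail : E → V) (v : V) : ℕ :=
  (Finset.univ.filter (fun e => tail e = v)).card

/-- The number of edges from `v` to `w`. -/
def numEdges {V E : Type} [Fintype E] [DecidableEq V] (tail head : E → V) (v w : V) : ℕ :=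
  (Finset.univ.filter (fun e => tail e = v ∧ head e = w)).card

/-- The vertices other than the (global) sink `s`. -/
abbrev Vne {V : Type} (s : V) : Type := {v : V // v ≠ s}

/-- Firing the vertex `v`. -/
def fire {V E : Type} [Fintype E] [DecidableEq V] {s : V} (tail head : E → V)
    (σ : Vne s → ℕ) (v : Vne s) : Vne s → ℕ :=
  fun w =>
    if w = v then σ v + numEdges tail head v.1 v.1 - outdeg tail v.1
    else σ w + numEdges tail head v.1 w.1

/-- A (non-sink) vertex is active when it has at least as many chips as outgoing edges. -/
def Active {V E : Type} [Fintype E] [DecidableEq V] {s : V} (tail : E → V)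
    (σ : Vne s → ℕ) (v : Vne s) : Prop :=
  outdeg tail v.1 ≤ σ v

/-- The result of firing the vertices in the list `l` in order, starting from `σ`. -/
def fireList {V E : Type} [Fintype E] [DecidableEq V] {s : V} (tail head : E → V)
    (σ : Vne s → ℕ) : List (Vne s) → (Vne s → ℕ)
  | [] => σ
  | v :: l => fireList tail head (fire tail head σ v) l

/-- The firing sequence `l` is legal from `σ`. -/
def Legal {V E : Type} [Fintype E] [DecidableEq V] {s : V} (tail head : E → V)
    (σ : Vne s → ℕ) : List (Vne s) → Prop
  | [] => True
  | v :: l => Active tail σ v ∧ Legal tail head (fire tail head σ v) l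

/-- A configuration is stable when no non-sink vertex is active. -/
def Stable {V E : Type} [Fintype E] [DecidableEq V] {s : V} (tail : E → V)
    (σ : Vne s → ℕ) : Prop :=
  ∀ v, σ v < outdeg tail v.1

/-- `σ` is accessible: from any chip configuration `ζ` one can obtain `σ` by adding
some chips and then performing a legal sequence of firings of active vertices. -/
def Accessible {V E : Type} [Fintype E] [DecidableEq V] {s : V} (tail head : E → V)
    (σ : Vne s → ℕ) : Prop :=
  ∀ ζ : Vne s → ℕ, ∃ (β : Vne s → ℕ) (l : List (Vne s)),
    Legal tail head (fun v => ζ v + β v) l ∧ fireList tail head (fun v => ζ v + β v) l = σ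

/-- A chip configuration is recurrent when it is both stable and accessible. -/
def Recurrent {V E : Type} [Fintype E] [DecidableEq V] {s : V} (tail head : E → V)
    (σ : Vne s → ℕ) : Prop :=
  Stable tail σ ∧ Accessible tail head σ

/-- The in-degree of a vertex. -/
def indeg {V E : Type} [Fintype E] [DecidableEq V] (head : E → V) (v : V) : ℕ :=
  (Finset.univ.filter (fun e => head e = v)).card

/-- The in-degree of `u` within the induced subgraph on the vertex set `A`:
the number of edges with head `u` whose tail lies in `A`. -/
def indegIn {V E : Type} [Fintype E] [DecidableEq V] (tail head : E → V)
    (A : Finset V) (u : V) : ℕ :=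
  (Finset.univ.filter (fun e => head e = u ∧ tail e ∈ A)).card


/-!
A batch of firings is recorded by its multiset `m`. Firing `m` takes `τ` to `σ` exactly when
`σ v + (m.count v) d_v = τ v + (chips sent to v by m)` for every `v` (`FiresTo`). Every legal
firing sequence satisfies this identity.

Suppose `σ` is recurrent, and reach it legally from a configuration with at least `d_v` chips
at every `v`. Then every vertex of a nonempty set `T` fires, since a vertex that never fires
would end up active. Let `v ∈ T` be the vertex whose last firing comes earliest. It is active
just before that firing, and it never fires afterwards. From that moment on every vertex of
`T` fires at least once, so `v` gets a chip along every edge from `T`. Hence `σ v` is at least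
the in-degree of `v` within `T`.

For the converse, let `ζ` be any configuration and stabilize `ζ + d`. This terminates because
every vertex reaches the sink. The firings used give a `β` for which the identity says that
`ζ + β` fires to `σ`. These firings can be carried out legally one at a time. Let `T` be the
set of vertices that still have to fire most often. Because `indeg ≤ outdeg`, an ample vertex
of `T` is active.
-/

open Finset

section

variable {V E : Type} [DecidableEq V] [Fintype E] (tail head : E → V)

theorem sum_numEdges_eq_outdeg [Fintype V] (v : V) :
    ∑ w, numEdges tail head v w = outdeg tail v := by
  rw [outdeg, card_eq_sum_card_fiberwise (f := head) (t := univ) fun _ _ => mem_univ _]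
  simp only [numEdges, filter_filter]

theorem sum_numEdges_vne_add_sink [Fintype V] (s v : V) :
    ∑ w : Vne s, numEdges tail head v w + numEdges tail head v s = outdeg tail v := by
  rw [← sum_numEdges_eq_outdeg, Fintype.sum_eq_add_sum_subtype_ne _ s, add_comm]

theorem sum_numEdges_eq_indeg [Fintype V] (v : V) :
    ∑ u, numEdges tail head u v = indeg head v := by
  rw [indeg, card_eq_sum_card_fiberwise (f := tail) (t := univ) fun _ _ => mem_univ _]
  simp only [numEdges, filter_filter, and_comm]

theorem indegIn_eq_sum (A : Finset V) (v : V) :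
    indegIn tail head A v = ∑ u ∈ A, numEdges tail head u v := by
  rw [indegIn, card_eq_sum_card_fiberwise (f := tail) (t := A) fun _ he => (mem_filter.mp he).2.2]
  refine sum_congr rfl fun u hu => congrArg card (ext fun e => ?_)
  simp only [mem_filter, mem_univ, true_and]
  constructor
  · rintro ⟨⟨hv, -⟩, rfl⟩
    exact ⟨rfl, hv⟩
  · rintro ⟨rfl, hv⟩
    exact ⟨⟨hv, hu⟩, rfl⟩

def HasEdge (a b : V) : Prop := ∃ e, tail e = a ∧ head e = b

theorem one_le_numEdges_of_hasEdge {a b : V} (h : HasEdge tail head a b) :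
    1 ≤ numEdges tail head a b := by
  obtain ⟨e, rfl, rfl⟩ := h
  exact card_pos.mpr ⟨e, by simp⟩

variable {s : V}

def inflow (m : Multiset (Vne s)) (v : V) : ℕ :=
  (m.map fun w => numEdges tail head w.1 v).sum

@[simp]
theorem inflow_zero (v : V) : inflow tail head (0 : Multiset (Vne s)) v = 0 := rfl

@[simp]
theorem inflow_cons (u : Vne s) (m : Multiset (Vne s)) (v : V) :
    inflow tail head (u ::ₘ m) v = numEdges tail head u.1 v + inflow tail head m v := by
  simp [inflow]

@[simp]
theorem inflow_add (m m' : Multiset (Vne s)) (v : V) :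
    inflow tail head (m + m') v = inflow tail head m v + inflow tail head m' v := by
  simp [inflow]

@[simp]
theorem inflow_nsmul (k : ℕ) (m : Multiset (Vne s)) (v : V) :
    inflow tail head (k • m) v = k * inflow tail head m v := by
  simp [inflow, Multiset.map_nsmul, Multiset.sum_nsmul]

theorem inflow_mono {m m' : Multiset (Vne s)} (h : m ≤ m') (v : V) :
    inflow tail head m v ≤ inflow tail head m' v := by
  obtain ⟨k, rfl⟩ := Multiset.le_iff_exists_add.mp h
  simp

theorem count_mul_numEdges_le_inflow (m : Multiset (Vne s)) (u : Vne s) (v : V) :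
    m.count u * numEdges tail head u.1 v ≤ inflow tail head m v := by
  have h := inflow_mono tail head (Multiset.le_count_iff_replicate_le (a := u) (s := m).mp le_rfl) v
  simpa [inflow] using h

theorem inflow_univ_le_indeg [Fintype V] (v : V) :
    inflow tail head (univ : Finset (Vne s)).val v ≤ indeg head v := by
  rw [← sum_numEdges_eq_indeg, Fintype.sum_eq_add_sum_subtype_ne _ s]
  exact Nat.le_add_left _ _

theorem indegIn_map_subtype (T : Finset (Vne s)) (v : V) :
    indegIn tail head (T.map (Function.Embedding.subtype _)) v = inflow tail head T.val v := by
  rw [indegIn_eq_sum, sum_map]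
  rfl

end

section

variable {V E : Type} [DecidableEq V] [Fintype E] (tail head : E → V) {s : V}

theorem fire_add_ite_outdeg {τ : Vne s → ℕ} {u : Vne s} (hu : Active tail τ u) (v : Vne s) :
    fire tail head τ u v + (if v = u then outdeg tail u.1 else 0)
      = τ v + numEdges tail head u.1 v.1 := by
  unfold fire
  split_ifs with h
  · subst h
    have : outdeg tail v.1 ≤ τ v := hu
    omega
  · rfl

/-- Firing the multiset `m` of vertices from `τ` gives `σ`, regardless of legality. The identity is
`σ = τ + inflow m - (count in m) • d`, stated without truncated subtraction. -/
def FiresTo (τ : Vne s → ℕ) (m : Multiset (Vne s)) (σ : Vne s → ℕ) : Prop :=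
  ∀ v, σ v + m.count v * outdeg tail v.1 = τ v + inflow tail head m v.1

theorem firesTo_zero (τ : Vne s → ℕ) : FiresTo tail head τ 0 τ := by
  simp [FiresTo]

theorem firesTo_cons_iff {τ σ : Vne s → ℕ} {u : Vne s} (m : Multiset (Vne s))
    (hu : Active tail τ u) :
    FiresTo tail head τ (u ::ₘ m) σ ↔ FiresTo tail head (fire tail head τ u) m σ := by
  refine forall_congr' fun v => ?_
  have hfire := fire_add_ite_outdeg tail head hu v
  rw [Multiset.count_cons, inflow_cons, add_mul]
  split_ifs at hfire ⊢ with h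
  · subst h
    omega
  · omega

theorem fireList_append (τ : Vne s → ℕ) (l₁ l₂ : List (Vne s)) :
    fireList tail head τ (l₁ ++ l₂) = fireList tail head (fireList tail head τ l₁) l₂ := by
  induction l₁ generalizing τ with
  | nil => rfl
  | cons u l ih => exact ih _

theorem legal_append (τ : Vne s → ℕ) (l₁ l₂ : List (Vne s)) :
    Legal tail head τ (l₁ ++ l₂) ↔
      Legal tail head τ l₁ ∧ Legal tail head (fireList tail head τ l₁) l₂ := by
  induction l₁ generalizing τ with
  | nil => simp [Legal, fireList]
  | cons u l ih => simp [Legal, fireList, ih, and_assoc]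

variable {tail head} in
theorem Legal.firesTo {τ : Vne s → ℕ} {l : List (Vne s)} (hl : Legal tail head τ l) :
    FiresTo tail head τ l (fireList tail head τ l) := by
  induction l generalizing τ with
  | nil => exact firesTo_zero tail head τ
  | cons u l ih =>
    rw [← Multiset.cons_coe, firesTo_cons_iff tail head _ hl.1]
    exact ih hl.2

theorem exists_legal_stable_of_length_le (N : ℕ) (τ : Vne s → ℕ)
    (hN : ∀ l, Legal tail head τ l → l.length ≤ N) :
    ∃ l, Legal tail head τ l ∧ Stable tail (fireList tail head τ l) := by
  induction N generalizing τ with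
  | zero =>
    refine ⟨[], trivial, fun u => ?_⟩
    by_contra hu
    simpa using hN [u] ⟨not_lt.mp hu, trivial⟩
  | succ N ih =>
    by_cases hst : Stable tail τ
    · exact ⟨[], trivial, hst⟩
    obtain ⟨u, hu⟩ := not_forall.mp hst
    obtain ⟨l, hl, hstab⟩ := ih (fire tail head τ u) fun l hl => by
      simpa using hN (u :: l) ⟨not_lt.mp hu, hl⟩
    exact ⟨u :: l, ⟨not_lt.mp hu, hl⟩, hstab⟩

end

section

variable {V E : Type} [Fintype V] [DecidableEq V] [Fintype E] (tail head : E → V) {s : V}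

theorem sum_fire_add_numEdges_sink {τ : Vne s → ℕ} {u : Vne s} (hu : Active tail τ u) :
    ∑ v, fire tail head τ u v + numEdges tail head u.1 s = ∑ v, τ v := by
  have hsum := sum_congr rfl fun v (_ : v ∈ univ) => fire_add_ite_outdeg tail head hu v
  have hout := sum_numEdges_vne_add_sink tail head s u.1
  rw [sum_add_distrib, sum_add_distrib, sum_ite_eq' univ u, if_pos (mem_univ u)] at hsum
  omega

variable {tail head}

theorem Legal.sum_fireList_add_inflow_sink {τ : Vne s → ℕ} {l : List (Vne s)}
    (hl : Legal tail head τ l) :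
    ∑ v, fireList tail head τ l v + inflow tail head (l : Multiset (Vne s)) s = ∑ v, τ v := by
  induction l generalizing τ with
  | nil => simp [fireList]
  | cons u l ih =>
    rw [← Multiset.cons_coe, inflow_cons, ← sum_fire_add_numEdges_sink tail head hl.1,
      ← ih hl.2]
    simp only [fireList]
    omega

theorem Legal.inflow_sink_le {τ : Vne s → ℕ} {l : List (Vne s)} (hl : Legal tail head τ l) :
    inflow tail head (l : Multiset (Vne s)) s ≤ ∑ v, τ v := by
  have := hl.sum_fireList_add_inflow_sink
  omega

theorem Legal.inflow_le_sum_add {τ : Vne s → ℕ} {l : List (Vne s)} (hl : Legal tail head τ l)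
    (c : Vne s) :
    inflow tail head (l : Multiset (Vne s)) c.1
      ≤ ∑ v, τ v + (l : Multiset (Vne s)).count c * outdeg tail c.1 := by
  have hfires := hl.firesTo c
  have hconserve := hl.sum_fireList_add_inflow_sink
  have hc : fireList tail head τ l c ≤ ∑ v, fireList tail head τ l v :=
    single_le_sum (fun _ _ => Nat.zero_le _) (mem_univ c)
  omega

variable (tail head)

theorem exists_inflow_bound (τ : Vne s → ℕ) {c : V}
    (hc : Relation.ReflTransGen (HasEdge tail head) c s) :
    ∃ B, ∀ l, Legal tail head τ l → inflow tail head (l : Multiset (Vne s)) c ≤ B := by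
  induction hc using Relation.ReflTransGen.head_induction_on with
  | refl => exact ⟨_, fun l hl => hl.inflow_sink_le⟩
  | @head a b hab _ ih =>
    obtain ⟨B, hB⟩ := ih
    by_cases ha : a = s
    · subst ha
      exact ⟨_, fun l hl => hl.inflow_sink_le⟩
    refine ⟨∑ v, τ v + B * outdeg tail a, fun l hl => ?_⟩
    have hcount : (l : Multiset (Vne s)).count ⟨a, ha⟩ ≤ B :=
      calc _ ≤ (l : Multiset (Vne s)).count ⟨a, ha⟩ * numEdges tail head a b :=
            Nat.le_mul_of_pos_right _ (one_le_numEdges_of_hasEdge tail head hab)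
        _ ≤ inflow tail head (l : Multiset (Vne s)) b := count_mul_numEdges_le_inflow ..
        _ ≤ B := hB l hl
    exact (hl.inflow_le_sum_add ⟨a, ha⟩).trans (by gcongr)

theorem exists_length_bound (hreach : ∀ v, Relation.ReflTransGen (HasEdge tail head) v s)
    (τ : Vne s → ℕ) : ∃ N, ∀ l, Legal tail head τ l → l.length ≤ N := by
  have hcount (u : Vne s) :
      ∃ M, ∀ l, Legal tail head τ l → (l : Multiset (Vne s)).count u ≤ M := by
    obtain hus | ⟨c, huc, hc⟩ := (hreach u.1).cases_head
    · exact absurd hus u.2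
    obtain ⟨B, hB⟩ := exists_inflow_bound tail head τ hc
    refine ⟨B, fun l hl => ?_⟩
    calc _ ≤ (l : Multiset (Vne s)).count u * numEdges tail head u.1 c :=
          Nat.le_mul_of_pos_right _ (one_le_numEdges_of_hasEdge tail head huc)
      _ ≤ inflow tail head (l : Multiset (Vne s)) c := count_mul_numEdges_le_inflow ..
      _ ≤ B := hB l hl
  choose M hM using hcount
  refine ⟨∑ u, M u, fun l hl => ?_⟩
  rw [← Multiset.coe_card, ← Multiset.sum_count_eq_card fun a _ => mem_univ a]
  exact sum_le_sum fun u _ => hM u l hl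

theorem exists_legal_stable (hreach : ∀ v, Relation.ReflTransGen (HasEdge tail head) v s)
    (τ : Vne s → ℕ) : ∃ l, Legal tail head τ l ∧ Stable tail (fireList tail head τ l) :=
  have ⟨N, hN⟩ := exists_length_bound tail head hreach τ
  exists_legal_stable_of_length_le tail head N τ hN

end

section

variable {V E : Type} [Fintype V] [DecidableEq V] [Fintype E] (tail head : E → V) {s : V}

def IsAmple (σ : Vne s → ℕ) (T : Finset (Vne s)) : Prop :=
  ∃ v ∈ T, inflow tail head T.val v.1 ≤ σ v

theorem exists_mem_inflow_add_outdeg_le (heul : ∀ v, v ≠ s → indeg head v ≤ outdeg tail v)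
    {σ : Vne s → ℕ} (hσ : ∀ T : Finset (Vne s), T.Nonempty → IsAmple tail head σ T)
    {m : Multiset (Vne s)} (hm : m ≠ 0) :
    ∃ u ∈ m, inflow tail head m u.1 + outdeg tail u.1 ≤ σ u + m.count u * outdeg tail u.1 := by
  obtain ⟨x, hx⟩ := Multiset.exists_mem_of_ne_zero hm
  obtain ⟨u₀, -, hu₀⟩ := exists_max_image univ (m.count ·) ⟨x, mem_univ x⟩
  have hpos : 1 ≤ m.count u₀ := (Multiset.one_le_count_iff_mem.mpr hx).trans (hu₀ x (mem_univ x))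
  obtain ⟨k, hk⟩ : ∃ k, m.count u₀ = k + 1 := ⟨m.count u₀ - 1, by omega⟩
  -- `T` collects the vertices firing most often (`k + 1` times); all others fire at most `k` times.
  set T := univ.filter fun w => m.count w = k + 1
  obtain ⟨u, huT, hu⟩ := hσ T ⟨u₀, by simp [T, hk]⟩
  have hcount : m.count u = k + 1 := (mem_filter.mp huT).2
  have hle : m ≤ k • univ.val + T.val := Multiset.le_iff_count.mpr fun w => by
    have := hu₀ w (mem_univ w)
    rw [Multiset.count_add, Multiset.count_nsmul, Multiset.count_univ,
      Multiset.count_eq_of_nodup T.nodup]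
    split_ifs with hw
    · exact (mem_filter.mp hw).2.le.trans (by omega)
    · have hw' : m.count w ≠ k + 1 := fun h => hw (mem_filter.mpr ⟨mem_univ w, h⟩)
      omega
  have hinflow := inflow_mono tail head hle u.1
  have heuler : k * inflow tail head (univ : Finset (Vne s)).val u.1 ≤ k * outdeg tail u.1 :=
    Nat.mul_le_mul_left k ((inflow_univ_le_indeg tail head u.1).trans (heul u.1 u.2))
  rw [inflow_add, inflow_nsmul] at hinflow
  refine ⟨u, Multiset.one_le_count_iff_mem.mp (by omega), ?_⟩
  rw [hcount, add_one_mul]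
  omega

theorem exists_legal_fireList_eq_of_firesTo
    (heul : ∀ v, v ≠ s → indeg head v ≤ outdeg tail v)
    {σ : Vne s → ℕ} (hσ : ∀ T : Finset (Vne s), T.Nonempty → IsAmple tail head σ T)
    (m : Multiset (Vne s)) {τ : Vne s → ℕ} (h : FiresTo tail head τ m σ) :
    ∃ l, Legal tail head τ l ∧ fireList tail head τ l = σ := by
  induction m using Multiset.strongInductionOn generalizing τ with
  | ih m ih =>
    rcases eq_or_ne m 0 with rfl | hm
    · exact ⟨[], trivial, funext fun v => by simpa [FiresTo, fireList] using (h v).symm⟩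
    obtain ⟨u, hum, hu⟩ := exists_mem_inflow_add_outdeg_le tail head heul hσ hm
    have hact : Active tail τ u := by
      have := h u
      unfold Active
      omega
    rw [← Multiset.cons_erase hum, firesTo_cons_iff tail head _ hact] at h
    obtain ⟨l, hl, rfl⟩ := ih _ (Multiset.erase_lt.mpr hum) h
    exact ⟨u :: l, ⟨hact, hl⟩, rfl⟩

end

theorem List.exists_eq_append_cons_forall_mem {α : Type*} {S : Set α} (hS : S.Nonempty) :
    ∀ l : List α, (∀ a ∈ S, a ∈ l) →
      ∃ l₁ v l₂, l = l₁ ++ v :: l₂ ∧ v ∈ S ∧ v ∉ l₂ ∧ ∀ a ∈ S, a ∈ v :: l₂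
  | [], h => absurd (h _ hS.some_mem) List.not_mem_nil
  | a :: l, h => by
    by_cases hl : ∀ b ∈ S, b ∈ l
    · obtain ⟨l₁, v, l₂, rfl, hv⟩ := exists_eq_append_cons_forall_mem hS l hl
      exact ⟨a :: l₁, v, l₂, rfl, hv⟩
    · obtain ⟨b, hbS, hbl⟩ := not_forall₂.mp hl
      obtain rfl : b = a := (List.mem_cons.mp (h b hbS)).resolve_right hbl
      exact ⟨[], b, l, rfl, hbS, hbl, h⟩

section

variable {V E : Type} [DecidableEq V] [Fintype E] {tail head : E → V} {s : V}

theorem Recurrent.isAmple {σ : Vne s → ℕ} (hrec : Recurrent tail head σ)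
    {T : Finset (Vne s)} (hT : T.Nonempty) : IsAmple tail head σ T := by
  obtain ⟨β, l, hl, hσ⟩ := hrec.2 fun v => outdeg tail v.1
  have hmem : ∀ u ∈ (T : Set (Vne s)), u ∈ l := by
    intro u _
    by_contra hul
    have hfires := hl.firesTo u
    rw [hσ, Multiset.count_eq_zero.mpr (Multiset.mem_coe.not.mpr hul)] at hfires
    have := hrec.1 u
    omega
  obtain ⟨l₁, v, l₂, rfl, hvT, hvl₂, hT⟩ := List.exists_eq_append_cons_forall_mem hT l hmem
  obtain ⟨-, hv, hl₂⟩ := (legal_append tail head _ l₁ (v :: l₂)).mp hl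
  have hfires := (show Legal tail head _ (v :: l₂) from ⟨hv, hl₂⟩).firesTo v
  rw [← fireList_append, hσ, ← Multiset.cons_coe, Multiset.count_cons_self,
    Multiset.count_eq_zero.mpr (Multiset.mem_coe.not.mpr hvl₂)] at hfires
  have hin : inflow tail head T.val v.1 ≤ inflow tail head (v :: l₂ : List (Vne s)) v.1 :=
    inflow_mono tail head ((Multiset.le_iff_subset T.nodup).mpr fun u hu => hT u hu) v.1
  have hact : outdeg tail v.1 ≤ _ := hv
  refine ⟨v, hvT, ?_⟩
  rw [← Multiset.cons_coe] at hin
  omega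

theorem recurrent_of_isAmple [Fintype V] (heul : ∀ v, v ≠ s → indeg head v ≤ outdeg tail v)
    (hreach : ∀ v, Relation.ReflTransGen (HasEdge tail head) v s)
    {σ : Vne s → ℕ} (hσ : Stable tail σ)
    (hample : ∀ T : Finset (Vne s), T.Nonempty → IsAmple tail head σ T) :
    Recurrent tail head σ := by
  refine ⟨hσ, fun ζ => ?_⟩
  obtain ⟨l, hl, hstable⟩ :=
    exists_legal_stable tail head hreach fun v => ζ v + outdeg tail v.1
  have hfires := hl.firesTo
  set ρ := fireList tail head (fun v => ζ v + outdeg tail v.1) l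
  refine ⟨fun v => σ v + outdeg tail v.1 - ρ v,
    exists_legal_fireList_eq_of_firesTo tail head heul hample l fun v => ?_⟩
  have := hfires v
  have := hstable v
  dsimp only at *
  omega

theorem forall_indegIn_le_iff_forall_isAmple (σ : Vne s → ℕ) :
    (∀ A : Finset V, (∀ a ∈ A, a ≠ s) → A.Nonempty →
        ∃ v : Vne s, v.1 ∈ A ∧ indegIn tail head A v.1 ≤ σ v) ↔
      ∀ T : Finset (Vne s), T.Nonempty → IsAmple tail head σ T := by
  constructor
  · intro h T hT
    obtain ⟨v, hv, hle⟩ := h (T.map (Function.Embedding.subtype _))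
      (fun a ha => by obtain ⟨w, -, rfl⟩ := mem_map.mp ha; exact w.2) hT.map
    rw [indegIn_map_subtype] at hle
    exact ⟨v, (mem_map' _).mp hv, hle⟩
  · intro h A hA ⟨a, ha⟩
    obtain ⟨v, hv, hle⟩ := h (A.subtype (· ≠ s)) ⟨⟨a, hA a ha⟩, mem_subtype.mpr ha⟩
    rw [← indegIn_map_subtype, subtype_map_of_mem hA] at hle
    exact ⟨v, mem_subtype.mp hv, hle⟩

end

theorem recurrent_iff_every_induced_subgraph_ample_general
    {V E : Type} [Fintype V] [DecidableEq V] [Fintype E]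
    (tail head : E → V)
    (s : V)
    (heul : ∀ v : V, v ≠ s → indeg head v ≤ outdeg tail v)
    (hglobal : ∀ v : V,
      Relation.ReflTransGen (fun a b => ∃ e, tail e = a ∧ head e = b) v s)
    (σ : Vne s → ℕ) (hσ : Stable tail σ) :
    Recurrent tail head σ ↔
      ∀ A : Finset V, (∀ a ∈ A, a ≠ s) → A.Nonempty →
        ∃ v : Vne s, v.1 ∈ A ∧ indegIn tail head A v.1 ≤ σ v := by
  rw [forall_indegIn_le_iff_forall_isAmple]
  exact ⟨fun hrec _ hT => hrec.isAmple hT, recurrent_of_isAmple heul hglobal hσ⟩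

/-- **Ample subgraphs characterize recurrence.**  Let `G` be an Eulerian digraph with
sink `s`.  A stable chip configuration `σ` on `G` is recurrent if and only if every
nonempty induced subgraph of `G ∖ s` is ample for `σ`, i.e. for every nonempty set `A`
of non-sink vertices there is a vertex `v ∈ A` whose number of chips is at least its
in-degree within the induced subgraph on `A`. -/
theorem recurrent_iff_every_induced_subgraph_ample
    {V E : Type} [Fintype V] [DecidableEq V] [Fintype E]
    (tail head : E → V)
    (s : V) (hs : outdeg tail s = 0)
    (heul : ∀ v : V, v ≠ s → indeg head v ≤ outdeg tail v)
    (hglobal : ∀ v : V,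
      Relation.ReflTransGen (fun a b => ∃ e, tail e = a ∧ head e = b) v s)
    (σ : Vne s → ℕ) (hσ : Stable tail σ) :
    Recurrent tail head σ ↔
      ∀ A : Finset V, (∀ a ∈ A, a ≠ s) → A.Nonempty →
        ∃ v : Vne s, v.1 ∈ A ∧ indegIn tail head A v.1 ≤ σ v :=
  recurrent_iff_every_induced_subgraph_ample_general tail head s heul hglobal σ hσ
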